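/- arXiv:2203.07771 — 3 statements merged into one kernel-verified Lean document; each statement's English description precedes it below -/
import Mathlib

section
/- Let 0 ≤ β ≤ γ ≤ 1 with γ > 0 and βγ < 1. Then for all real x with (1 − γ)/(1 − β) < x < √(γ/β) (interpreting √(γ/β) as +∞ when β = 0), it holds that β(β − 1)x³ + βγ(β − 1)x² + (γ − 1)x + γ(γ − 1) ≤ 0. -/
theorem cubic_inequality (β γ : ℝ) (hβ : 0 ≤ β) (hβγ : β ≤ γ) (hγ1 : γ ≤ 1)
    (hγ : 0 < γ) (hbg : β * γ < 1) :
    ∀ x : ℝ, (1 - γ) / (1 - β) < x → (β = 0 ∨ x < Real.sqrt (γ / β)) →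
      β * (β - 1) * x ^ 3 + β * γ * (β - 1) * x ^ 2 + (γ - 1) * x + γ * (γ - 1) ≤ 0 := by
  intro x hx1 hx2
  have hβ1 : β < 1 := by nlinarith
  have hd : 0 ≤ (1 - γ) / (1 - β) := div_nonneg (by linarith) (by linarith)
  have hx0 : 0 < x := lt_of_le_of_lt hd hx1
  rcases eq_or_lt_of_le hβ with h0 | hb
  · rw [← h0]
    nlinarith
  · have hs : x < Real.sqrt (γ / β) := hx2.resolve_left (ne_of_gt hb)
    have hx2' : x ^ 2 < γ / β := (Real.lt_sqrt hx0.le).mp hs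
    have hkey : x ^ 2 * β < γ := (lt_div_iff₀ hb).mp hx2'
    nlinarith [mul_nonneg (add_pos hx0 hγ).le
      (by nlinarith [sq_nonneg x, mul_nonneg hβ (sq_nonneg x)] :
        0 ≤ (1 - β) * β * x ^ 2 + (1 - γ))]
end

section
/- Let β ≥ 0, γ > 0 with βγ < 1. Define h(y) = −(1 − βγ)e^y / ((βe^y + 1)(e^y + γ)) for y ∈ ℝ. Then for all y ∈ ℝ, |h(y)| ≤ (1 − √(βγ)) / (1 + √(βγ)). -/
theorem abs_h_le_amgm (β γ : ℝ) (hβ : 0 ≤ β) (hγ : 0 < γ) (hbg : β * γ < 1) :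
    ∀ y : ℝ,
      |-((1 - β * γ) * Real.exp y / ((β * Real.exp y + 1) * (Real.exp y + γ)))|
        ≤ (1 - Real.sqrt (β * γ)) / (1 + Real.sqrt (β * γ)) := by
  intro y
  set e := Real.exp y with he
  have he0 : 0 < e := Real.exp_pos y
  have hs2 : Real.sqrt (β * γ) ^ 2 = β * γ := Real.sq_sqrt (by positivity)
  set s := Real.sqrt (β * γ) with hsdef
  have hs0 : 0 ≤ s := Real.sqrt_nonneg _
  have hs1 : s < 1 := by nlinarith
  have hB : 0 < (β * e + 1) * (e + γ) := by positivity
  have hbb : Real.sqrt β ^ 2 = β := Real.sq_sqrt hβ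
  have hgg : Real.sqrt γ ^ 2 = γ := Real.sq_sqrt hγ.le
  have hsm : s = Real.sqrt β * Real.sqrt γ := Real.sqrt_mul hβ γ
  have key : 2 * s * e ≤ β * e ^ 2 + γ := by
    nlinarith [sq_nonneg (Real.sqrt β * e - Real.sqrt γ), Real.sqrt_nonneg β,
      Real.sqrt_nonneg γ]
  rw [abs_neg, abs_div, abs_of_nonneg (by nlinarith : (0:ℝ) ≤ (1 - β * γ) * e),
    abs_of_pos hB, div_le_div_iff₀ hB (by positivity)]
  nlinarith [mul_nonneg (sub_nonneg.2 hs1.le) (sub_nonneg.2 key), he0.le]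
end

section
/- Let μ be a probability distribution over {−1,+1}^n with generating function g_μ(z₁,…,z_n) = ∑_σ μ(σ)·∏_{i: σ_i = +1} z_i, and let α ∈ (0,1). Define F(z) = g_μ(z₁^α,…,z_n^α)^{1/α} / ∏_i (μ_i(+1)z_i + μ_i(−1)). Suppose μ is ζ-marginally stable for some ζ > 1, meaning in particular μ_i^σ(+1)/μ_i^σ(−1) ≤ 2ζ·μ_i(+1) for every i and every feasible pinning σ of the other coordinates. Then for any x ∈ ℝ_{>0}^n and any coordinate i with x_i ≥ (2ζ)^{1/(1−α)}, the partial derivative ∂F/∂z_i evaluated at x is ≤ 0. -/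
open Finset

/-- Marginal probability `μ_i(b)` (with `true` encoding spin `+1`). -/
noncomputable def margProb {n : ℕ} (μ : (Fin n → Bool) → ℝ) (i : Fin n) (b : Bool) : ℝ :=
  ∑ σ : Fin n → Bool, if σ i = b then μ σ else 0

/-- Generating function `g_μ(z) = ∑_σ μ(σ) ∏_{i : σ_i = +1} z_i`. -/
noncomputable def genFun {n : ℕ} (μ : (Fin n → Bool) → ℝ) (z : Fin n → ℝ) : ℝ :=
  ∑ σ : Fin n → Bool, μ σ * ∏ i : Fin n, if σ i then z i else 1

/-- `F(z) = g_μ(z₁^α,…,z_n^α)^{1/α} / ∏ᵢ (μ_i(+1) zᵢ + μ_i(−1))`. -/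
noncomputable def Ffun {n : ℕ} (μ : (Fin n → Bool) → ℝ) (α : ℝ) (z : Fin n → ℝ) : ℝ :=
  (genFun μ fun i => z i ^ α) ^ (1 / α) /
    ∏ i : Fin n, (margProb μ i true * z i + margProb μ i false)

/-!
Along the line `t ↦ x[i := t]`, `F = (A + B t^α)^{1/α} / ((p t + q) C)` with `p, q` the marginals
at `i`, `A, B` the coefficients of `g_μ(x^α)` in `z_i` and `C ≥ 0` the other factors of the
denominator; the sign of `F'` is that of `q B t^{α-1} - p A`. Marginal stability at each pinning
of the other coordinates gives `B ≤ 2ζ p A`, and `t ≥ (2ζ)^{1/(1-α)}` gives `2ζ t^{α-1} ≤ 1`.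
-/

open Function

theorem Fintype.sum_eq_sum_filter_sum_update {ι M : Type*} [Fintype ι] [DecidableEq ι]
    [AddCommMonoid M] (i : ι) (f : (ι → Bool) → M) :
    ∑ σ, f σ = ∑ σ with σ i = false, ∑ b, f (update σ i b) := by
  rw [← sum_filter_add_sum_filter_not univ (fun σ => σ i = false)]
  simp only [Fintype.sum_bool, sum_add_distrib,
    add_comm (∑ σ with σ i = false, f (update σ i true))]
  congr 1
  · exact Finset.sum_congr rfl fun σ hσ => by rw [← (mem_filter.mp hσ).2, update_eq_self]
  · refine sum_nbij' (update · i false) (update · i true) (fun σ _ => by simp)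
      (fun σ _ => by simp) (fun σ hσ => ?_) (fun σ hσ => ?_) (fun σ hσ => ?_) <;>
    simp only [Bool.not_eq_false, mem_filter, mem_univ, true_and] at hσ <;>
    rw [update_idem, ← hσ, update_eq_self]

theorem mul_rpow_sub_one_le_one {c α t : ℝ} (hc : 0 ≤ c) (hα : α < 1) (ht0 : 0 < t)
    (ht : c ^ (1 / (1 - α)) ≤ t) : c * t ^ (α - 1) ≤ 1 := by
  have hct : c ≤ t ^ (1 - α) :=
    (Real.rpow_inv_le_iff_of_pos hc ht0.le (by linarith)).mp (by rwa [← one_div])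
  rw [show α - 1 = -(1 - α) by ring, Real.rpow_neg ht0.le, ← div_eq_mul_inv]
  exact div_le_one_of_le₀ hct (Real.rpow_nonneg ht0.le _)

theorem deriv_rpow_inv_div_affine_nonpos {A B p q α t : ℝ} (hα0 : 0 < α) (hα1 : α ≤ 1)
    (ht : 0 < t) (hu : 0 ≤ A + B * t ^ α) (hD : 0 < p * t + q)
    (hkey : q * (B * t ^ (α - 1)) ≤ p * A) :
    deriv (fun s => (A + B * s ^ α) ^ (1 / α) / (p * s + q)) t ≤ 0 := by
  have hN : HasDerivAt (fun s => A + B * s ^ α) (B * (α * t ^ (α - 1))) t :=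
    ((Real.hasDerivAt_rpow_const (Or.inl ht.ne')).const_mul B).const_add A
  have hG := hN.rpow_const (p := 1 / α) (Or.inr (by rw [le_div_iff₀ hα0]; linarith))
  have hD' : HasDerivAt (fun s => p * s + q) (p * 1) t :=
    ((hasDerivAt_id t).const_mul p).add_const q
  rw [(hG.fun_div hD' hD.ne').deriv]
  refine div_nonpos_of_nonpos_of_nonneg ?_ (sq_nonneg _)
  have hsplit : (A + B * t ^ α) ^ (1 / α) = (A + B * t ^ α) ^ (1 / α - 1) * (A + B * t ^ α) := by
    rw [← Real.rpow_add_one' hu (by simp [hα0.ne']), sub_add_cancel]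
  have hpow : t ^ α = t ^ (α - 1) * t := by
    rw [Real.rpow_sub_one ht.ne', div_mul_cancel₀ _ ht.ne']
  calc _ = (A + B * t ^ α) ^ (1 / α - 1) * (q * (B * t ^ (α - 1)) - p * A) := by
          rw [hsplit, hpow]; field_simp; ring
    _ ≤ 0 := mul_nonpos_of_nonneg_of_nonpos (Real.rpow_nonneg hu _) (by linarith)

section GenFun

variable {n : ℕ} (μ : (Fin n → Bool) → ℝ)

theorem margProb_nonneg (hμ0 : ∀ σ, 0 ≤ μ σ) (i : Fin n) (b : Bool) : 0 ≤ margProb μ i b :=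
  sum_nonneg fun σ _ => by split_ifs <;> simp [hμ0]

theorem margProb_true_add_false (i : Fin n) :
    margProb μ i true + margProb μ i false = ∑ σ, μ σ := by
  rw [margProb, margProb, ← sum_add_distrib]
  exact Finset.sum_congr rfl fun σ _ => by cases σ i <;> simp

/-- The coefficients of the affine map `z_i ↦ g_μ(z)`; a configuration of the other coordinates is
represented by the `σ` with `σ i = false` extending it. -/
noncomputable def genFunPinned (i : Fin n) (b : Bool) (z : Fin n → ℝ) : ℝ :=
  ∑ σ with σ i = false, μ (update σ i b) * ∏ j ∈ univ \ {i}, if σ j then z j else 1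

theorem genFun_update (z : Fin n → ℝ) (i : Fin n) (t : ℝ) :
    genFun μ (update z i t) = genFunPinned μ i false z + genFunPinned μ i true z * t := by
  rw [genFun, Fintype.sum_eq_sum_filter_sum_update i, genFunPinned, genFunPinned, sum_mul,
    ← sum_add_distrib]
  refine Finset.sum_congr rfl fun σ _ => ?_
  simp only [apply_update₂ (fun j (b : Bool) (s : ℝ) => if b then s else 1),
    prod_update_of_mem (mem_univ i), Fintype.sum_bool, if_true, Bool.false_eq_true, if_false]
  ring

variable {μ}

theorem genFunPinned_nonneg (hμ0 : ∀ σ, 0 ≤ μ σ) {z : Fin n → ℝ} (hz : ∀ j, 0 ≤ z j)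
    (i : Fin n) (b : Bool) : 0 ≤ genFunPinned μ i b z :=
  sum_nonneg fun σ _ => mul_nonneg (hμ0 _) (prod_nonneg fun j _ => by split_ifs <;> simp [hz])

theorem genFunPinned_true_le (hμ0 : ∀ σ, 0 ≤ μ σ) {z : Fin n → ℝ} (hz : ∀ j, 0 ≤ z j)
    {i : Fin n} {K : ℝ}
    (hK : ∀ τ, 0 < μ (update τ i true) + μ (update τ i false) →
      μ (update τ i true) ≤ K * μ (update τ i false)) :
    genFunPinned μ i true z ≤ K * genFunPinned μ i false z := by
  rw [genFunPinned, genFunPinned, mul_sum]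
  refine sum_le_sum fun σ _ => ?_
  have hσ : μ (update σ i true) ≤ K * μ (update σ i false) := by
    rcases (add_nonneg (hμ0 (update σ i true)) (hμ0 (update σ i false))).eq_or_lt with h | h
    · obtain ⟨h1, h0⟩ := (add_eq_zero_iff_of_nonneg (hμ0 _) (hμ0 _)).mp h.symm
      rw [h1, h0, mul_zero]
    · exact hK σ h
  rw [← mul_assoc]
  exact mul_le_mul_of_nonneg_right hσ (prod_nonneg fun j _ => by split_ifs <;> simp [hz])

theorem margProb_mul_add_nonneg (hμ0 : ∀ σ, 0 ≤ μ σ) (i : Fin n) {t : ℝ} (ht : 0 ≤ t) :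
    0 ≤ margProb μ i true * t + margProb μ i false :=
  add_nonneg (mul_nonneg (margProb_nonneg μ hμ0 i true) ht) (margProb_nonneg μ hμ0 i false)

theorem margProb_mul_add_pos (hμ0 : ∀ σ, 0 ≤ μ σ) (hμ1 : ∑ σ, μ σ = 1) (i : Fin n) {t : ℝ}
    (ht : 0 < t) : 0 < margProb μ i true * t + margProb μ i false := by
  have hpq := (margProb_true_add_false μ i).trans hμ1
  rcases (margProb_nonneg μ hμ0 i false).eq_or_lt with hq | hq
  · rw [← hq] at hpq ⊢
    simpa [show margProb μ i true = 1 by linarith] using ht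
  · exact add_pos_of_nonneg_of_pos (mul_nonneg (margProb_nonneg μ hμ0 i true) ht.le) hq

theorem margProb_false_mul_genFunPinned_true_le (hμ0 : ∀ σ, 0 ≤ μ σ) (hμ1 : ∑ σ, μ σ = 1)
    {z : Fin n → ℝ} (hz : ∀ j, 0 ≤ z j) {i : Fin n} {c y : ℝ}
    (hK : ∀ τ, 0 < μ (update τ i true) + μ (update τ i false) →
      μ (update τ i true) ≤ c * margProb μ i true * μ (update τ i false))
    (hy : 0 ≤ y) (hcy : c * y ≤ 1) :
    margProb μ i false * (genFunPinned μ i true z * y) ≤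
      margProb μ i true * genFunPinned μ i false z := by
  have hp := margProb_nonneg μ hμ0 i true
  have hq : margProb μ i false ≤ 1 := by linarith [(margProb_true_add_false μ i).trans hμ1]
  have hA := genFunPinned_nonneg hμ0 hz i false
  have hBA := genFunPinned_true_le hμ0 hz hK
  calc margProb μ i false * (genFunPinned μ i true z * y)
      ≤ 1 * (c * margProb μ i true * genFunPinned μ i false z * y) :=
        mul_le_mul hq (mul_le_mul_of_nonneg_right hBA hy)
          (mul_nonneg (genFunPinned_nonneg hμ0 hz i true) hy) zero_le_one
    _ = margProb μ i true * genFunPinned μ i false z * (c * y) := by ring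
    _ ≤ margProb μ i true * genFunPinned μ i false z :=
        mul_le_of_le_one_right (mul_nonneg hp hA) hcy

end GenFun

theorem Ffun_update {n : ℕ} (μ : (Fin n → Bool) → ℝ) (α : ℝ) (x : Fin n → ℝ) (i : Fin n)
    (t : ℝ) :
    Ffun μ α (update x i t) =
      (genFunPinned μ i false (fun j => x j ^ α) + genFunPinned μ i true (fun j => x j ^ α) *
        t ^ α) ^ (1 / α) / (margProb μ i true * t + margProb μ i false) /
      ∏ j ∈ univ \ {i}, (margProb μ j true * x j + margProb μ j false) := by
  simp only [Ffun, ← genFun_update, apply_update (fun _ (s : ℝ) => s ^ α),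
    apply_update (fun j s => margProb μ j true * s + margProb μ j false),
    prod_update_of_mem (mem_univ i), div_mul_eq_div_div]

theorem partial_deriv_nonpos_of_marginal_stability {n : ℕ} (α ζ : ℝ)
    (hα : α ∈ Set.Ioo (0 : ℝ) 1) (hζ : 1 < ζ)
    (μ : (Fin n → Bool) → ℝ) (hμ0 : ∀ σ, 0 ≤ μ σ)
    (hμ1 : ∑ σ : Fin n → Bool, μ σ = 1)
    (hms : ∀ (i : Fin n) (τ : Fin n → Bool),
      0 < μ (Function.update τ i true) + μ (Function.update τ i false) →
      μ (Function.update τ i true)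
        ≤ 2 * ζ * margProb μ i true * μ (Function.update τ i false)) :
    ∀ x : Fin n → ℝ, (∀ j, 0 < x j) → ∀ i : Fin n,
      (2 * ζ) ^ ((1 : ℝ) / (1 - α)) ≤ x i →
      deriv (fun t => Ffun μ α (Function.update x i t)) (x i) ≤ 0 := by
  obtain ⟨hα0, hα1⟩ := hα
  intro x hx i hxi
  have hz : ∀ j, 0 ≤ x j ^ α := fun j => Real.rpow_nonneg (hx j).le α
  have hζx : 2 * ζ * x i ^ (α - 1) ≤ 1 := mul_rpow_sub_one_le_one (by linarith) hα1 (hx i) hxi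
  have hkey := margProb_false_mul_genFunPinned_true_le hμ0 hμ1 hz (hms i)
    (Real.rpow_nonneg (hx i).le _) hζx
  simp only [Ffun_update, deriv_div_const]
  refine div_nonpos_of_nonpos_of_nonneg ?_ (prod_nonneg fun j _ =>
    margProb_mul_add_nonneg hμ0 j (hx j).le)
  exact deriv_rpow_inv_div_affine_nonpos hα0 hα1.le (hx i)
    (add_nonneg (genFunPinned_nonneg hμ0 hz i false)
      (mul_nonneg (genFunPinned_nonneg hμ0 hz i true) (hz i)))
    (margProb_mul_add_pos hμ0 hμ1 i (hx i)) hkey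
end
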